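/- arXiv:2202.04831 — 10 statements merged into one kernel-verified Lean document; each statement's English description precedes it below -/
import Mathlib

section
/- Let c : ℤ → ℤ be finitely supported with Σ_{3 ∤ i} c_i = 0. Let m ≥ 1 and n ≥ 0 be integers with 3^n ∣ m. Then S_{2m} = Σ_i c_i · i^{2m} satisfies S_{2m} ≡ 0 (mod 3^{n+1}). -/
/-!
By Euler's theorem, `i ^ (2m) ≡ 1 (mod 3^(n+1))` whenever `3 ∤ i`, since `φ(3^(n+1)) = 2·3^n`
divides `2m`; and `3^(n+1) ∣ i ^ (2m)` whenever `3 ∣ i`, since `n + 1 ≤ 2m`. Hence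
`S_{2m} ≡ Σ_{3 ∤ i} c_i = 0`.
-/

open Nat Finset

theorem Int.pow_modEq_one_of_totient_dvd {N e : ℕ} {i : ℤ} (hi : IsCoprime i N) (he : φ N ∣ e) :
    i ^ e ≡ 1 [ZMOD N] := by
  obtain ⟨k, rfl⟩ := he
  rw [← ZMod.intCast_eq_intCast_iff, Int.cast_pow, ← ZMod.coe_unitOfIsCoprime i hi,
    ← Units.val_pow_eq_pow_val, pow_mul, ZMod.pow_totient, one_pow, Units.val_one, Int.cast_one]

theorem Int.pow_modEq_prime_pow {p k e : ℕ} (hp : p.Prime) (hφ : φ (p ^ k) ∣ e) (hke : k ≤ e)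
    (i : ℤ) : i ^ e ≡ if (p : ℤ) ∣ i then 0 else 1 [ZMOD (p : ℤ) ^ k] := by
  split_ifs with hpi
  · exact Int.modEq_zero_iff_dvd.mpr ((pow_dvd_pow _ hke).trans (pow_dvd_pow_of_dvd hpi e))
  · have hcop : IsCoprime i ((p ^ k : ℕ) : ℤ) := by
      push_cast
      exact (((Nat.prime_iff_prime_int.mp hp).coprime_iff_not_dvd.mpr hpi).pow_left).symm
    exact_mod_cast Int.pow_modEq_one_of_totient_dvd hcop hφ

theorem Int.sum_mul_pow_modEq_sum_filter_not_dvd {p k e : ℕ} (hp : p.Prime)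
    (hφ : φ (p ^ k) ∣ e) (hke : k ≤ e) (s : Finset ℤ) (c : ℤ → ℤ) :
    ∑ i ∈ s, c i * i ^ e ≡ ∑ i ∈ s with ¬ (p : ℤ) ∣ i, c i [ZMOD (p : ℤ) ^ k] := by
  calc ∑ i ∈ s, c i * i ^ e
      ≡ ∑ i ∈ s, c i * if (p : ℤ) ∣ i then 0 else 1 [ZMOD (p : ℤ) ^ k] :=
        Int.ModEq.sum fun i _ => (Int.pow_modEq_prime_pow hp hφ hke i).mul_left _
    _ = ∑ i ∈ s with ¬ (p : ℤ) ∣ i, c i := by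
        simp only [sum_filter, mul_ite, mul_zero, mul_one, ite_not]

/-- If `c : ℤ → ℤ` is finitely supported with `Σ_{3 ∤ i} c_i = 0`,
`m ≥ 1`, `n ≥ 0` and `3^n ∣ m`, then `S_{2m} = Σ_i c_i i^{2m} ≡ 0 (mod 3^{n+1})`. -/
theorem even_power_sum_mod_three_pow (c : ℤ →₀ ℤ)
    (h3 : ∑ i ∈ c.support.filter (fun i => ¬ (3 : ℤ) ∣ i), c i = 0)
    (m n : ℕ) (hm : 1 ≤ m) (hdvd : 3 ^ n ∣ m) :
    (∑ i ∈ c.support, c i * i ^ (2 * m)) ≡ 0 [ZMOD (3 ^ (n + 1))] := by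
  have htotient : φ (3 ^ (n + 1)) ∣ 2 * m := by
    rw [totient_prime_pow prime_three n.succ_pos, mul_comm]
    exact Nat.mul_dvd_mul_left 2 hdvd
  have hexp : n + 1 ≤ 2 * m := by
    have := (n.lt_pow_self (by norm_num : 1 < 3)).trans_le (Nat.le_of_dvd hm hdvd)
    omega
  have := Int.sum_mul_pow_modEq_sum_filter_not_dvd prime_three htotient hexp c.support c
  push_cast at this
  rwa [h3] at this
end

section
/- Let c : ℤ → ℤ be finitely supported with Σ_{i ≡ 1 (mod 3)} c_i - Σ_{i ≡ 2 (mod 3)} c_i = 0. Let m ≥ 1 and n ≥ 0 be integers with 3^n ∣ (2m+1). Then S_{2m+1} = Σ_i c_i · i^{2m+1} satisfies S_{2m+1} ≡ 0 (mod 3^{n+1}). -/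
/-!
Every integer `i` is congruent mod `3` to `χ i ∈ {0, 1, -1}`, where `χ = chiThree` is the
nontrivial character mod `3`. Congruence mod `p` upgrades to congruence mod `p ^ (n + 1)` after
raising to the power `p ^ n`, so `i ^ N ≡ χ i ^ N = χ i (mod 3 ^ (n + 1))` for odd `N` divisible
by `3 ^ n`. Hence `S_N ≡ ∑ c i * χ i`, which is the alternating sum assumed to vanish.
-/

theorem pow_sub_pow_dvd_of_dvd_sub {R : Type*} [CommRing R] {p n N : ℕ} {a b : R}
    (h : (p : R) ∣ a - b) (hN : p ^ n ∣ N) : (p : R) ^ (n + 1) ∣ a ^ N - b ^ N := by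
  obtain ⟨k, rfl⟩ := hN
  simpa only [pow_mul] using (dvd_sub_pow_of_dvd_sub h n).trans (sub_dvd_pow_sub_pow _ _ k)

def chiThree (i : ℤ) : ℤ :=
  if i % 3 = 1 then 1 else if i % 3 = 2 then -1 else 0

theorem three_dvd_sub_chiThree (i : ℤ) : 3 ∣ i - chiThree i := by
  unfold chiThree
  split_ifs <;> omega

theorem chiThree_pow_of_odd {N : ℕ} (hN : Odd N) (i : ℤ) : chiThree i ^ N = chiThree i := by
  unfold chiThree
  split_ifs <;> simp [hN.neg_one_pow, hN.pos.ne']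

theorem pow_modEq_chiThree {n N : ℕ} (hN : Odd N) (hdvd : 3 ^ n ∣ N) (i : ℤ) :
    i ^ N ≡ chiThree i [ZMOD 3 ^ (n + 1)] := by
  have h := pow_sub_pow_dvd_of_dvd_sub (p := 3) (three_dvd_sub_chiThree i) hdvd
  rw [chiThree_pow_of_odd hN] at h
  exact (Int.modEq_iff_dvd.mpr (by exact_mod_cast h)).symm

theorem sum_mul_chiThree (c : ℤ →₀ ℤ) :
    ∑ i ∈ c.support, c i * chiThree i =
      ∑ i ∈ c.support.filter (fun i => i % 3 = 1), c i
        - ∑ i ∈ c.support.filter (fun i => i % 3 = 2), c i := by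
  rw [Finset.sum_filter, Finset.sum_filter, ← Finset.sum_sub_distrib]
  refine Finset.sum_congr rfl fun i _ => ?_
  unfold chiThree
  split_ifs <;> omega

theorem odd_power_sum_mod_three_pow_general (c : ℤ →₀ ℤ)
    (h3 : ∑ i ∈ c.support.filter (fun i => i % 3 = 1), c i
        - ∑ i ∈ c.support.filter (fun i => i % 3 = 2), c i = 0)
    (m n : ℕ) (hdvd : 3 ^ n ∣ 2 * m + 1) :
    (∑ i ∈ c.support, c i * i ^ (2 * m + 1)) ≡ 0 [ZMOD (3 ^ (n + 1))] := by
  calc ∑ i ∈ c.support, c i * i ^ (2 * m + 1)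
      ≡ ∑ i ∈ c.support, c i * chiThree i [ZMOD 3 ^ (n + 1)] :=
        Int.ModEq.sum fun i _ => (pow_modEq_chiThree (odd_two_mul_add_one m) hdvd i).mul_left _
    _ = 0 := (sum_mul_chiThree c).trans h3

/-- If `c : ℤ → ℤ` is finitely supported with
`Σ_{i ≡ 1 (3)} c_i - Σ_{i ≡ 2 (3)} c_i = 0`, `m ≥ 1`, `n ≥ 0` and `3^n ∣ 2m+1`,
then `S_{2m+1} = Σ_i c_i i^{2m+1} ≡ 0 (mod 3^{n+1})`. -/
theorem odd_power_sum_mod_three_pow (c : ℤ →₀ ℤ)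
    (h3 : ∑ i ∈ c.support.filter (fun i => i % 3 = 1), c i
        - ∑ i ∈ c.support.filter (fun i => i % 3 = 2), c i = 0)
    (m n : ℕ) (hm : 1 ≤ m) (hdvd : 3 ^ n ∣ 2 * m + 1) :
    (∑ i ∈ c.support, c i * i ^ (2 * m + 1)) ≡ 0 [ZMOD (3 ^ (n + 1))] :=
  odd_power_sum_mod_three_pow_general c h3 m n hdvd
end

section
/- Let c : ℤ → ℤ be finitely supported such that the sum of c_i over odd indices i is even and Σ_{3 ∤ i} c_i = 0. Then for every integer k ≥ 1, writing n for the 3-adic valuation of k (the largest n with 3^n ∣ k), the integer S_{2k} = Σ_i c_i · i^{2k} is divisible by 2 · 3^{n+1}. -/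
/-!
Split `S_{2k} = Σ_i c_i i^{2k}` according to whether `i` is a unit modulo the prime `p ∈ {2, 3}`.
For the units, `i^{2k} ≡ 1` (mod `2`, resp. mod `3^{n+1}`, by Fermat and lifting the exponent
along `3^n ∣ k`), so they contribute their coefficient sum, which vanishes modulo the prime power
by hypothesis; the multiples of `p` contribute `0`, since `p^{2k}` is already divisible by
`2`, resp. `3^{n+1}`.
-/

open Finset

theorem dvd_sum_mul_of_dvd_sub_one_of_dvd {ι R : Type*} [CommRing R] (s : Finset ι)
    (c f : ι → R) (p : ι → Prop) [DecidablePred p] {d : R}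
    (hp : ∀ i ∈ s, p i → d ∣ f i - 1) (hnp : ∀ i ∈ s, ¬ p i → d ∣ f i)
    (hsum : d ∣ ∑ i ∈ s.filter p, c i) :
    d ∣ ∑ i ∈ s, c i * f i := by
  rw [← sum_filter_add_sum_filter_not s p]
  refine dvd_add ?_ (dvd_sum fun i hi ↦ ?_)
  · have hsplit : ∑ i ∈ s.filter p, c i * f i
        = ∑ i ∈ s.filter p, c i * (f i - 1) + ∑ i ∈ s.filter p, c i := by
      rw [← sum_add_distrib]
      exact sum_congr rfl fun i _ ↦ by ring
    rw [hsplit]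
    refine dvd_add (dvd_sum fun i hi ↦ ?_) hsum
    rw [mem_filter] at hi
    exact (hp i hi.1 hi.2).mul_left _
  · rw [mem_filter] at hi
    exact (hnp i hi.1 hi.2).mul_left _

theorem pow_succ_dvd_pow_sub_one_of_dvd_sub_one {R : Type*} [CommRing R] {p n k : ℕ} {a : R}
    (ha : (p : R) ∣ a - 1) (hk : p ^ n ∣ k) : (p : R) ^ (n + 1) ∣ a ^ k - 1 := by
  obtain ⟨m, rfl⟩ := hk
  rw [pow_mul]
  have h := dvd_sub_pow_of_dvd_sub ha n
  rw [one_pow] at h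
  exact h.trans (sub_one_dvd_pow_sub_one _ m)

theorem Int.pow_succ_dvd_pow_mul_sub_one {p n k : ℕ} (hp : p.Prime) {i : ℤ}
    (hi : ¬ (p : ℤ) ∣ i) (hk : p ^ n ∣ k) :
    (p : ℤ) ^ (n + 1) ∣ i ^ ((p - 1) * k) - 1 := by
  have hcop : IsCoprime i p :=
    ((Nat.prime_iff_prime_int.mp hp).irreducible.coprime_iff_not_dvd.mpr hi).symm
  rw [pow_mul]
  exact pow_succ_dvd_pow_sub_one_of_dvd_sub_one
    (Int.ModEq.pow_card_sub_one_eq_one hp hcop).symm.dvd hk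

/-- If `c : ℤ → ℤ` is finitely supported, the sum of `c_i` over odd
indices is even and `Σ_{3 ∤ i} c_i = 0`, then for every `k ≥ 1`, with `n` the
3-adic valuation of `k`, the integer `S_{2k} = Σ_i c_i i^{2k}` is divisible by
`2 · 3^{n+1}`. -/
theorem even_power_sum_divisibility (c : ℤ →₀ ℤ)
    (hodd : 2 ∣ ∑ i ∈ c.support.filter (fun i => Odd i), c i)
    (h3 : ∑ i ∈ c.support.filter (fun i => ¬ (3 : ℤ) ∣ i), c i = 0)
    (k : ℕ) (hk : 1 ≤ k) :
    (2 * 3 ^ (padicValNat 3 k + 1) : ℤ) ∣ ∑ i ∈ c.support, c i * i ^ (2 * k) := by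
  set n := padicValNat 3 k
  have hnk : 3 ^ n ∣ k := pow_padicValNat_dvd
  have hn : n + 1 ≤ 2 * k := by
    have := Nat.le_of_dvd hk hnk
    have := Nat.lt_pow_self (n := n) (by norm_num : 1 < 3)
    omega
  have hdvd_two : (2 : ℤ) ∣ ∑ i ∈ c.support, c i * i ^ (2 * k) :=
    dvd_sum_mul_of_dvd_sub_one_of_dvd _ _ _ Odd
      (fun i _ hi ↦ (hi.pow.sub_odd odd_one).two_dvd)
      (fun i _ hi ↦ dvd_pow (Int.not_odd_iff_even.mp hi).two_dvd (by omega)) hodd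
  have hdvd_three : (3 : ℤ) ^ (n + 1) ∣ ∑ i ∈ c.support, c i * i ^ (2 * k) :=
    dvd_sum_mul_of_dvd_sub_one_of_dvd _ _ _ (fun i ↦ ¬ (3 : ℤ) ∣ i)
      (fun i _ hi ↦ by simpa using Int.pow_succ_dvd_pow_mul_sub_one Nat.prime_three hi hnk)
      (fun i _ hi ↦ (pow_dvd_pow 3 hn).trans (pow_dvd_pow_of_dvd (not_not.mp hi) _))
      (h3 ▸ dvd_zero _)
  have hcop : IsCoprime (2 : ℤ) (3 ^ (n + 1)) :=
    (Int.isCoprime_iff_gcd_eq_one.mpr rfl).pow_right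
  exact hcop.mul_dvd hdvd_two hdvd_three
end

section
/- For every integer k ≥ 1, gcd(9^k + 1 - 16^k, 2·(4^k - 1)) = 2 · 3^{n+1}, where n is the 3-adic valuation of k (the largest n with 3^n ∣ k). (The gcd is taken of the integers 9^k + 1 - 16^k and 2·(4^k - 1).) -/
/-!
Since `16^k - 1 = (4^k - 1)(4^k + 1)`, the number `9^k + 1 - 16^k` is congruent to `9^k` modulo
`4^k - 1`. It is even while `4^k - 1` is odd, so the gcd is `2 · gcd(3^(2k), 4^k - 1)`, which is
`2 · 3^v` for `v = v₃(4^k - 1)`. Lifting the exponent gives `v = v₃(k) + 1`, and `v ≤ 2k`.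
-/

theorem Int.gcd_two_mul_of_even_of_odd {a m : ℤ} (ha : Even a) (hm : Odd m) :
    Int.gcd a (2 * m) = 2 * Int.gcd a m := by
  have hm' : Nat.Coprime 2 m.natAbs := Nat.coprime_two_left.2 (Int.natAbs_odd.2 hm)
  rw [Int.gcd_eq_natAbs, Int.gcd_eq_natAbs, Int.natAbs_mul, show (2 : ℤ).natAbs = 2 from rfl,
    Nat.Coprime.gcd_mul _ hm', Nat.gcd_eq_right (even_iff_two_dvd.1 (Int.natAbs_even.2 ha))]

theorem Nat.gcd_prime_pow_eq_pow_padicValNat {p a m : ℕ} [hp : Fact p.Prime] (hm : m ≠ 0)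
    (h : padicValNat p m ≤ a) : Nat.gcd (p ^ a) m = p ^ padicValNat p m := by
  refine Nat.dvd_antisymm ?_ (Nat.dvd_gcd (pow_dvd_pow p h) pow_padicValNat_dvd)
  obtain ⟨j, -, hj⟩ := (Nat.dvd_prime_pow hp.out).1 (Nat.gcd_dvd_left (p ^ a) m)
  have hjm : p ^ j ∣ m := hj ▸ Nat.gcd_dvd_right _ _
  exact hj ▸ pow_dvd_pow p ((padicValNat_dvd_iff_le hm).1 hjm)

theorem padicValNat_three_four_pow_sub_one {k : ℕ} (hk : k ≠ 0) :
    padicValNat 3 (4 ^ k - 1) = padicValNat 3 k + 1 := by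
  simpa [add_comm] using
    padicValNat.pow_sub_pow (p := 3) (x := 4) (y := 1) (by decide) (by norm_num) (by norm_num)
      (by norm_num) hk

/-- For every `k ≥ 1`,
`gcd(9^k + 1 - 16^k, 2·(4^k - 1)) = 2 · 3^{n+1}`, where `n` is the 3-adic
valuation of `k`. -/
theorem gcd_trefoil_figure_eight (k : ℕ) (hk : 1 ≤ k) :
    Int.gcd (9 ^ k + 1 - 16 ^ k) (2 * (4 ^ k - 1)) =
      2 * 3 ^ (padicValNat 3 k + 1) := by
  have hk0 : k ≠ 0 := Nat.one_le_iff_ne_zero.1 hk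
  have heven : Even ((9 : ℤ) ^ k + 1 - 16 ^ k) :=
    (Odd.pow (by decide)).add_one.sub ((by decide : Even (16 : ℤ)).pow_of_ne_zero hk0)
  have hodd : Odd ((4 : ℤ) ^ k - 1) :=
    ((by decide : Even (4 : ℤ)).pow_of_ne_zero hk0).sub_odd odd_one
  have hsplit : (9 : ℤ) ^ k + 1 - 16 ^ k = 9 ^ k - (4 ^ k - 1) * (4 ^ k + 1) := by
    rw [show (16 : ℤ) = 4 ^ 2 by norm_num, ← pow_mul, mul_comm 2, pow_mul]; ring
  have hval := padicValNat_three_four_pow_sub_one hk0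
  have hvalk : padicValNat 3 k < k := Nat.padicValNat_lt_self hk0
  have hM : 4 ^ k - 1 ≠ 0 := Nat.sub_ne_zero_of_lt (Nat.one_lt_pow hk0 (by norm_num))
  calc Int.gcd (9 ^ k + 1 - 16 ^ k) (2 * (4 ^ k - 1))
      = 2 * Int.gcd (9 ^ k) (4 ^ k - 1) := by
        rw [Int.gcd_two_mul_of_even_of_odd heven hodd, hsplit, Int.gcd_sub_mul_left_left]
    _ = 2 * Nat.gcd (3 ^ (2 * k)) (4 ^ k - 1) := by
        rw [← Int.gcd_natCast_natCast]; push_cast [Nat.one_le_pow]; norm_num [pow_mul]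
    _ = 2 * 3 ^ (padicValNat 3 k + 1) := by
        rw [Nat.gcd_prime_pow_eq_pow_padicValNat hM (by omega), hval]
end

section
/- Let c : ℤ → ℤ be finitely supported such that the sum of c_i over odd indices i is even, and let k ≥ 1. Then the rational number q = 2^{k-1} · k! · S_{2k} / (2k)!, where S_{2k} = Σ_i c_i · i^{2k}, has odd denominator (in lowest terms); equivalently, q lies in the localization ℤ_{(2)} of ℤ at the prime 2, i.e. if q ≠ 0 its 2-adic valuation is nonnegative. -/
lemma odd_doubleFactorial_odd : ∀ n : ℕ, Odd ((2 * n + 1).doubleFactorial)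
  | 0 => by simp [Nat.doubleFactorial]
  | n + 1 => by
    have h := odd_doubleFactorial_odd n
    have e : 2 * (n + 1) + 1 = (2 * n + 1) + 2 := by ring
    rw [e, Nat.doubleFactorial_add_two]
    have ho2 : Odd (2 * n + 1 + 2) := ⟨n + 1, by ring⟩
    exact ho2.mul h

lemma rat_den_div_dvd (m : ℤ) (D : ℕ) : ((m : ℚ) / (D : ℚ)).den ∣ D := by
  have h := Rat.den_dvd m (D : ℤ)
  rw [Rat.divInt_eq_div] at h
  exact_mod_cast h

/-- If `c : ℤ → ℤ` is finitely supported and the sum of `c_i` over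
odd indices is even, then for `k ≥ 1` the rational
`q = 2^{k-1} · k! · S_{2k} / (2k)!`, with `S_{2k} = Σ_i c_i i^{2k}`, has odd
denominator (i.e. lies in `ℤ_{(2)}`). -/
theorem two_localization_even (c : ℤ →₀ ℤ)
    (hodd : 2 ∣ ∑ i ∈ c.support.filter (fun i => Odd i), c i)
    (k : ℕ) (hk : 1 ≤ k) :
    Odd ((2 ^ (k - 1) * (k.factorial : ℚ) *
        ((∑ i ∈ c.support, c i * i ^ (2 * k) : ℤ) : ℚ) /
        ((2 * k).factorial : ℚ)).den) := by
  -- S is even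
  have hS : (2 : ℤ) ∣ ∑ i ∈ c.support, c i * i ^ (2 * k) := by
    rw [← Finset.sum_filter_add_sum_filter_not c.support (fun i => Odd i)]
    have h1 : (2 : ℤ) ∣ ∑ i ∈ c.support.filter (fun i => Odd i),
        (c i * i ^ (2 * k) - c i) := by
      apply Finset.dvd_sum
      intro i hi
      have hoi : Odd i := (Finset.mem_filter.mp hi).2
      have heq : c i * i ^ (2 * k) - c i = c i * (i ^ (2 * k) - 1) := by ring
      rw [heq]
      have hop : Odd (i ^ (2 * k)) := hoi.pow
      obtain ⟨t, ht⟩ := hop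
      exact Dvd.dvd.mul_left ⟨t, by omega⟩ _
    have h2 : (2 : ℤ) ∣ ∑ i ∈ c.support.filter (fun i => ¬ Odd i),
        c i * i ^ (2 * k) := by
      apply Finset.dvd_sum
      intro i hi
      have hei : Even i := Int.not_odd_iff_even.mp (Finset.mem_filter.mp hi).2
      obtain ⟨r, hr⟩ := hei
      have h2i : (2 : ℤ) ∣ i := ⟨r, by omega⟩
      exact Dvd.dvd.mul_left (dvd_pow h2i (by omega)) _
    have hsplit : ∑ i ∈ c.support.filter (fun i => Odd i), c i * i ^ (2 * k) =
        (∑ i ∈ c.support.filter (fun i => Odd i), (c i * i ^ (2 * k) - c i)) +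
          ∑ i ∈ c.support.filter (fun i => Odd i), c i := by
      rw [← Finset.sum_add_distrib]
      simp
    rw [hsplit]
    exact dvd_add (dvd_add h1 hodd) h2
  obtain ⟨m, hm⟩ := hS
  set D := (2 * k - 1).doubleFactorial with hD
  have hfac : ((2 * k).factorial) = 2 ^ k * k.factorial * D := by
    have h1 : 2 * k = (2 * k - 1) + 1 := by omega
    rw [h1, Nat.factorial_eq_mul_doubleFactorial]
    rw [← h1, Nat.doubleFactorial_two_mul]
  have hDodd : Odd D := by
    have e : 2 * k - 1 = 2 * (k - 1) + 1 := by omega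
    rw [hD, e]
    exact odd_doubleFactorial_odd (k - 1)
  have hD0 : (D : ℚ) ≠ 0 := Nat.cast_ne_zero.mpr (Nat.doubleFactorial_pos _).ne'
  have hf0 : (k.factorial : ℚ) ≠ 0 := Nat.cast_ne_zero.mpr k.factorial_pos.ne'
  have h2pow : (2 : ℚ) ^ k = 2 ^ (k - 1) * 2 := by
    rw [← pow_succ]
    congr 1
    omega
  have key : (2 ^ (k - 1) * (k.factorial : ℚ) *
        ((∑ i ∈ c.support, c i * i ^ (2 * k) : ℤ) : ℚ) /
        ((2 * k).factorial : ℚ)) = (m : ℚ) / (D : ℚ) := by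
    rw [hm, hfac]
    push_cast
    rw [div_eq_div_iff (mul_ne_zero (mul_ne_zero (by positivity) hf0) hD0) hD0, h2pow]
    ring
  rw [key]
  have hdvd := rat_den_div_dvd m D
  have h2d : ¬ (2 ∣ ((m : ℚ) / (D : ℚ)).den) := by
    intro h
    obtain ⟨s, hs⟩ := h.trans hdvd
    rw [Nat.odd_iff] at hDodd
    omega
  rw [Nat.odd_iff]
  omega
end

section
/- Let c : ℤ → ℤ be finitely supported with Σ_{i ≡ 1 (mod 4)} c_i - Σ_{i ≡ 3 (mod 4)} c_i = 0, and let k ≥ 1. Then the rational number q = 2^{k-2} · k! · S_{2k+1} / (2k+1)!, where S_{2k+1} = Σ_i c_i · i^{2k+1} and 2^{k-2} is interpreted in ℚ (so 2^{-1} when k = 1), has odd denominator (in lowest terms); equivalently, q lies in the localization ℤ_{(2)} of ℤ at the prime 2. -/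
open Finset Nat

lemma odd_dfac (n : ℕ) : Odd ((2 * n + 1)‼) := by
  induction n with
  | zero => decide
  | succ n ih =>
    have : 2 * (n + 1) + 1 = (2 * n + 1) + 2 := by ring
    rw [this, Nat.doubleFactorial_add_two]
    exact Odd.mul ⟨n + 1, by ring⟩ ih

/-- If `c : ℤ → ℤ` is finitely supported with
`Σ_{i ≡ 1 (4)} c_i - Σ_{i ≡ 3 (4)} c_i = 0`, then for `k ≥ 1` the rational
`q = 2^{k-2} · k! · S_{2k+1} / (2k+1)!` (with `2^{k-2}` interpreted in `ℚ`,
so `2⁻¹` when `k = 1`), where `S_{2k+1} = Σ_i c_i i^{2k+1}`, has odd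
denominator (i.e. lies in `ℤ_{(2)}`). -/
theorem two_localization_odd (c : ℤ →₀ ℤ)
    (h4 : ∑ i ∈ c.support.filter (fun i => i % 4 = 1), c i
        - ∑ i ∈ c.support.filter (fun i => i % 4 = 3), c i = 0)
    (k : ℕ) (hk : 1 ≤ k) :
    Odd (((2 : ℚ) ^ ((k : ℤ) - 2) * (k.factorial : ℚ) *
        ((∑ i ∈ c.support, c i * i ^ (2 * k + 1) : ℤ) : ℚ) /
        ((2 * k + 1).factorial : ℚ)).den) := by
  set S : ℤ := ∑ i ∈ c.support, c i * i ^ (2 * k + 1) with hSdef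
  -- Step 1: 4 ∣ S
  have key : ∀ i ∈ c.support, (4:ℤ) ∣ (c i * i ^ (2*k+1)
      - (if i % 4 = 1 then c i else 0) + (if i % 4 = 3 then c i else 0)) := by
    intro i _
    have hm : i % 4 = 0 ∨ i % 4 = 1 ∨ i % 4 = 2 ∨ i % 4 = 3 := by omega
    rcases hm with h | h | h | h
    · have h4i : (4:ℤ) ∣ i := Int.dvd_of_emod_eq_zero h
      simp only [h]
      norm_num
      exact Dvd.dvd.mul_left (h4i.trans (dvd_pow_self i (by omega))) _
    · simp only [h]
      norm_num
      have h1 : i ^ (2*k+1) ≡ 1 ^ (2*k+1) [ZMOD 4] := Int.ModEq.pow _ (by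
        unfold Int.ModEq; omega)
      have hd := (h1.mul_left (c i)).dvd
      simp only [one_pow, mul_one] at hd
      obtain ⟨j, hj⟩ := hd
      exact ⟨-j, by linarith⟩
    · have h2i : (2:ℤ) ∣ i := by omega
      simp only [h]
      norm_num
      have : (4:ℤ) ∣ i ^ 2 := by
        obtain ⟨j, rfl⟩ := h2i; exact ⟨j^2, by ring⟩
      exact Dvd.dvd.mul_left (this.trans (pow_dvd_pow i (by omega))) _
    · simp only [h]
      norm_num
      have h1 : i ^ (2*k+1) ≡ (-1) ^ (2*k+1) [ZMOD 4] := Int.ModEq.pow _ (by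
        unfold Int.ModEq; omega)
      rw [Odd.neg_one_pow ⟨k, by ring⟩] at h1
      have hd := (h1.mul_left (c i)).dvd
      simp only [mul_neg, mul_one] at hd
      obtain ⟨j, hj⟩ := hd
      exact ⟨-j, by linarith⟩
  have hdvd : (4 : ℤ) ∣ S := by
    have hsum := Finset.dvd_sum key
    rw [Finset.sum_add_distrib, Finset.sum_sub_distrib,
      ← Finset.sum_filter, ← Finset.sum_filter] at hsum
    omega
  obtain ⟨T, hT⟩ := hdvd
  -- Step 2: rewrite the rational
  have hfact : ((2*k+1).factorial : ℚ) = ((2*k+1)‼ : ℚ) * (2^k * (k.factorial : ℚ)) := by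
    have : (2*k+1).factorial = (2*k+1)‼ * (2*k)‼ := Nat.factorial_eq_mul_doubleFactorial (2*k)
    rw [this, Nat.doubleFactorial_two_mul]
    push_cast; ring
  have hkey : (2 : ℚ) ^ ((k : ℤ) - 2) * (k.factorial : ℚ) * (S : ℚ) /
      ((2 * k + 1).factorial : ℚ) = (T : ℚ) / (((2*k+1)‼ : ℤ) : ℚ) := by
    have h2 : (2:ℚ) ^ ((k : ℤ) - 2) = 2^k / 4 := by
      rw [zpow_sub₀ (by norm_num), zpow_natCast]; norm_num
    have hd0 : (((2*k+1)‼ : ℚ)) ≠ 0 := by positivity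
    have hf0 : ((k.factorial : ℚ)) ≠ 0 := by positivity
    rw [h2, hT, hfact]
    push_cast
    field_simp
  rw [hkey]
  have hden : ((((T : ℚ)) / (((2*k+1)‼ : ℤ) : ℚ)).den : ℤ) ∣ ((2*k+1)‼ : ℤ) := by
    rw [← Rat.divInt_eq_div]
    exact Rat.den_dvd T ((2*k+1)‼ : ℤ)
  have hodd := odd_dfac k
  rw [Nat.odd_iff] at hodd ⊢
  by_contra h
  have h2 : (2:ℤ) ∣ (((T : ℚ)) / (((2*k+1)‼ : ℤ) : ℚ)).den := by omega
  have := h2.trans hden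
  omega
end

section
/- Let c : ℤ → ℤ be finitely supported such that the sum of c_i over odd indices i is even and Σ_{3 ∤ i} c_i = 0. For k ≥ 1 let n_k denote the 3-adic valuation of k and set v_{2k} = S_{2k}/(2·3^{n_k+1}) where S_{2k} = Σ_i c_i · i^{2k} (an integer, since 2·3^{n_k+1} ∣ S_{2k}). Then v_{2k} ≡ v_{2k+2} (mod 2) for all k ≥ 1. -/
/-!
Write `S e = ∑ c i * i ^ e`. Modulo 2 every `i ^ e` with `e ≥ 1` is the indicator of `i` odd,
and modulo `3 ^ (n + 1)` with `n = v₃ k`, Euler's theorem (`φ (3 ^ (n + 1)) = 2 * 3 ^ n ∣ 2 * k`) makes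
`i ^ (2 * k)` the indicator of `3 ∤ i`; the two hypotheses therefore give `2 * 3 ^ (n + 1) ∣ S (2 * k)`.
Since `i ^ 4 ≡ i ^ 2 [ZMOD 4]`, `S (2 * k + 2) ≡ S (2 * k) [ZMOD 4]` for `k ≥ 1`, and dividing this
congruence by `2` times an odd number gives the claim modulo `2`.
-/

open Nat

theorem Int.pow_totient_modEq_one {x : ℤ} {n : ℕ} (h : IsCoprime (n : ℤ) x) :
    x ^ φ n ≡ 1 [ZMOD n] := by
  rw [← ZMod.intCast_eq_intCast_iff]
  obtain ⟨u, hu⟩ := (ZMod.coe_int_isUnit_iff_isCoprime x n).mpr h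
  push_cast
  rw [← hu, ← Units.val_pow_eq_pow_val, ZMod.pow_totient, Units.val_one]

theorem Int.pow_prime_pow_mul_modEq_one {p : ℕ} (hp : p.Prime) {x : ℤ} (hx : ¬ (p : ℤ) ∣ x)
    (n s : ℕ) : x ^ (p ^ n * (p - 1) * s) ≡ 1 [ZMOD p ^ (n + 1)] := by
  have hcop : IsCoprime ((p ^ (n + 1) : ℕ) : ℤ) x := by
    push_cast
    exact ((Nat.prime_iff_prime_int.mp hp).irreducible.coprime_iff_not_dvd.mpr hx).pow_left
  have := (Int.pow_totient_modEq_one hcop).pow s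
  rwa [one_pow, ← pow_mul, totient_prime_pow_succ hp, Nat.cast_pow] at this

theorem Int.pow_four_modEq_sq (x : ℤ) : x ^ 4 ≡ x ^ 2 [ZMOD 4] := by
  refine (ZMod.intCast_eq_intCast_iff (x ^ 4) (x ^ 2) 4).mp ?_
  push_cast
  generalize (x : ZMod 4) = y
  revert y
  decide

theorem Int.modEq_two_of_two_mul_modEq_four {u u' v w : ℤ} (hu : Odd u) (hu' : Odd u')
    (h : 2 * (u * v) ≡ 2 * (u' * w) [ZMOD 4]) : v ≡ w [ZMOD 2] := by
  have huv : u * v ≡ u' * w [ZMOD 2] := Int.ModEq.mul_left_cancel' two_ne_zero h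
  have hu1 : u ≡ 1 [ZMOD 2] := Int.odd_iff.mp hu
  have hu'1 : u' ≡ 1 [ZMOD 2] := Int.odd_iff.mp hu'
  simpa using (hu1.symm.mul_right v).trans (huv.trans (hu'1.mul_right w))

def powerSum (c : ℤ →₀ ℤ) (e : ℕ) : ℤ :=
  ∑ i ∈ c.support, c i * i ^ e

theorem powerSum_modEq_sum_filter (c : ℤ →₀ ℤ) {m : ℤ} (P : ℤ → Prop) [DecidablePred P] {e : ℕ}
    (h1 : ∀ i, P i → i ^ e ≡ 1 [ZMOD m]) (h0 : ∀ i, ¬ P i → i ^ e ≡ 0 [ZMOD m]) :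
    powerSum c e ≡ ∑ i ∈ c.support.filter P, c i [ZMOD m] := by
  rw [Finset.sum_filter]
  refine Int.ModEq.sum fun i _ => ?_
  by_cases hi : P i
  · simpa [hi] using (h1 i hi).mul_left (c i)
  · simpa [hi] using (h0 i hi).mul_left (c i)

theorem two_dvd_powerSum (c : ℤ →₀ ℤ) (hodd : 2 ∣ ∑ i ∈ c.support.filter (fun i => Odd i), c i)
    {e : ℕ} (he : e ≠ 0) : 2 ∣ powerSum c e := by
  refine (Int.ModEq.dvd_iff (powerSum_modEq_sum_filter c (fun i => Odd i) ?_ ?_)).mpr hodd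
  · exact fun i hi => Int.odd_iff.mp (hi.pow)
  · intro i hi
    exact Int.modEq_zero_iff_dvd.mpr (dvd_pow (Int.not_odd_iff_even.mp hi).two_dvd he)

theorem three_pow_dvd_powerSum (c : ℤ →₀ ℤ)
    (h3 : ∑ i ∈ c.support.filter (fun i => ¬ (3 : ℤ) ∣ i), c i = 0) {k : ℕ} (hk : k ≠ 0) :
    3 ^ (padicValNat 3 k + 1) ∣ powerSum c (2 * k) := by
  set n := padicValNat 3 k
  obtain ⟨s, hs⟩ : 3 ^ n ∣ k := pow_padicValNat_dvd
  have hn : n + 1 ≤ 2 * k := by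
    have := Nat.le_of_dvd (Nat.pos_of_ne_zero hk) ⟨s, hs⟩
    have := Nat.lt_pow_self (n := n) (by norm_num : 1 < 3)
    omega
  have hsum := powerSum_modEq_sum_filter c (m := 3 ^ (n + 1)) (e := 2 * k)
    (fun i => ¬ (3 : ℤ) ∣ i) ?_ ?_
  · rw [h3] at hsum
    exact Int.modEq_zero_iff_dvd.mp hsum
  · intro i hi
    have := Int.pow_prime_pow_mul_modEq_one Nat.prime_three hi n s
    rwa [show 3 ^ n * (3 - 1) * s = 2 * k by rw [hs]; ring, Nat.cast_ofNat] at this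
  · intro i hi
    exact Int.modEq_zero_iff_dvd.mpr
      ((pow_dvd_pow 3 hn).trans (pow_dvd_pow_of_dvd (not_not.mp hi) _))

theorem two_mul_three_pow_dvd_powerSum (c : ℤ →₀ ℤ)
    (hodd : 2 ∣ ∑ i ∈ c.support.filter (fun i => Odd i), c i)
    (h3 : ∑ i ∈ c.support.filter (fun i => ¬ (3 : ℤ) ∣ i), c i = 0) {k : ℕ} (hk : k ≠ 0) :
    2 * 3 ^ (padicValNat 3 k + 1) ∣ powerSum c (2 * k) := by
  have hcop : IsCoprime (2 : ℤ) (3 ^ (padicValNat 3 k + 1)) :=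
    IsCoprime.pow_right (by rw [Int.isCoprime_iff_gcd_eq_one]; rfl)
  exact hcop.mul_dvd (two_dvd_powerSum c hodd (by omega)) (three_pow_dvd_powerSum c h3 hk)

theorem powerSum_two_mul_succ_modEq (c : ℤ →₀ ℤ) {k : ℕ} (hk : 1 ≤ k) :
    powerSum c (2 * (k + 1)) ≡ powerSum c (2 * k) [ZMOD 4] := by
  obtain ⟨j, rfl⟩ := Nat.exists_eq_add_of_le' hk
  refine Int.ModEq.sum fun i _ => Int.ModEq.mul_left _ ?_
  have := (Int.pow_four_modEq_sq i).mul_left (i ^ (2 * j))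
  rwa [← pow_add, ← pow_add] at this

/-- If `c : ℤ → ℤ` is finitely supported, the sum of `c_i` over odd
indices is even and `Σ_{3 ∤ i} c_i = 0`, then with
`v_{2k} = S_{2k}/(2·3^{v₃(k)+1})` where `S_{2k} = Σ_i c_i i^{2k}` (an integer by
the divisibility `2·3^{v₃(k)+1} ∣ S_{2k}`), one has `v_{2k} ≡ v_{2k+2} (mod 2)`
for all `k ≥ 1`. -/
theorem v_two_k_mod_two (c : ℤ →₀ ℤ)
    (hodd : 2 ∣ ∑ i ∈ c.support.filter (fun i => Odd i), c i)
    (h3 : ∑ i ∈ c.support.filter (fun i => ¬ (3 : ℤ) ∣ i), c i = 0)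
    (k : ℕ) (hk : 1 ≤ k) :
    ((∑ i ∈ c.support, c i * i ^ (2 * k)) / (2 * 3 ^ (padicValNat 3 k + 1)))
      ≡ ((∑ i ∈ c.support, c i * i ^ (2 * (k + 1))) /
          (2 * 3 ^ (padicValNat 3 (k + 1) + 1))) [ZMOD 2] := by
  change powerSum c (2 * k) / _ ≡ powerSum c (2 * (k + 1)) / _ [ZMOD 2]
  obtain ⟨v, hv⟩ := two_mul_three_pow_dvd_powerSum c hodd h3 (k := k) (by omega)
  obtain ⟨w, hw⟩ := two_mul_three_pow_dvd_powerSum c hodd h3 (k := k + 1) (by omega)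
  have h4 := (powerSum_two_mul_succ_modEq c hk).symm
  rw [hv, hw, mul_assoc, mul_assoc] at h4
  rw [hv, hw, Int.mul_ediv_cancel_left _ (by positivity), Int.mul_ediv_cancel_left _ (by positivity)]
  exact Int.modEq_two_of_two_mul_modEq_four (Odd.pow (by decide)) (Odd.pow (by decide)) h4
end

section
/- Let c : ℤ → ℤ be finitely supported such that the sum of c_i over odd indices i is even and Σ_{3 ∤ i} c_i = 0. Set v_4 = S_4/6 and v_8 = S_8/6 where S_k = Σ_i c_i · i^k (both are integers, since 6 ∣ S_4 and 6 ∣ S_8). Then v_4 ≡ v_8 (mod 5). -/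
private lemma two_dvd_S (c : ℤ →₀ ℤ)
    (hodd : 2 ∣ ∑ i ∈ c.support.filter (fun i => Odd i), c i) (k : ℕ) (hk : k ≠ 0) :
    (2 : ℤ) ∣ ∑ i ∈ c.support, c i * i ^ k := by
  have : ((∑ i ∈ c.support, c i * i ^ k : ℤ) : ZMod 2) = 0 := by
    push_cast
    rw [show (∑ i ∈ c.support, (c i : ZMod 2) * (i : ZMod 2) ^ k)
        = ∑ i ∈ c.support, (if Odd i then (c i : ZMod 2) else 0) from ?_]
    · rw [← Finset.sum_filter]
      have := (ZMod.intCast_zmod_eq_zero_iff_dvd _ 2).mpr hodd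
      push_cast at this
      exact this
    · refine Finset.sum_congr rfl fun i _ => ?_
      by_cases h : Odd i
      · simp only [if_pos h]
        have : (i : ZMod 2) = 1 := by
          obtain ⟨m, rfl⟩ := h
          push_cast
          have h2 : (2 : ZMod 2) = 0 := rfl
          rw [h2]; ring
        rw [this, one_pow, mul_one]
      · simp only [if_neg h]
        have h2 : (2 : ℤ) ∣ i := by
          rcases Int.even_or_odd i with he | ho
          · exact he.two_dvd
          · exact absurd ho h
        have : (i : ZMod 2) = 0 := (ZMod.intCast_zmod_eq_zero_iff_dvd _ 2).mpr h2
        rw [this, zero_pow hk, mul_zero]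
  exact_mod_cast (ZMod.intCast_zmod_eq_zero_iff_dvd _ 2).mp this

private lemma three_dvd_S (c : ℤ →₀ ℤ)
    (h3 : ∑ i ∈ c.support.filter (fun i => ¬ (3 : ℤ) ∣ i), c i = 0) (k : ℕ)
    (hpow : ∀ x : ZMod 3, x ≠ 0 → x ^ k = 1) (hk : k ≠ 0) :
    (3 : ℤ) ∣ ∑ i ∈ c.support, c i * i ^ k := by
  have : ((∑ i ∈ c.support, c i * i ^ k : ℤ) : ZMod 3) = 0 := by
    push_cast
    rw [show (∑ i ∈ c.support, (c i : ZMod 3) * (i : ZMod 3) ^ k)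
        = ∑ i ∈ c.support, (if ¬ (3:ℤ) ∣ i then (c i : ZMod 3) else 0) from ?_]
    · rw [← Finset.sum_filter]
      have : ((∑ i ∈ c.support.filter (fun i => ¬ (3 : ℤ) ∣ i), c i : ℤ) : ZMod 3) = 0 := by
        rw [h3]; simp
      push_cast at this
      exact this
    · refine Finset.sum_congr rfl fun i _ => ?_
      by_cases h : (3:ℤ) ∣ i
      · simp only [if_neg (not_not_intro h)]
        have : (i : ZMod 3) = 0 := (ZMod.intCast_zmod_eq_zero_iff_dvd _ 3).mpr h
        rw [this, zero_pow hk, mul_zero]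
      · simp only [if_pos h]
        have hne : (i : ZMod 3) ≠ 0 := fun hc =>
          h ((ZMod.intCast_zmod_eq_zero_iff_dvd _ 3).mp hc)
        rw [hpow _ hne, mul_one]
  exact_mod_cast (ZMod.intCast_zmod_eq_zero_iff_dvd _ 3).mp this

/-- If `c : ℤ → ℤ` is finitely supported, the sum of `c_i` over odd
indices is even and `Σ_{3 ∤ i} c_i = 0`, then with `v₄ = S₄/6` and `v₈ = S₈/6`
where `S_k = Σ_i c_i i^k` (both integers since `6 ∣ S₄` and `6 ∣ S₈`), one has
`v₄ ≡ v₈ (mod 5)`. -/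
theorem v_four_congruent_v_eight (c : ℤ →₀ ℤ)
    (hodd : 2 ∣ ∑ i ∈ c.support.filter (fun i => Odd i), c i)
    (h3 : ∑ i ∈ c.support.filter (fun i => ¬ (3 : ℤ) ∣ i), c i = 0) :
    ((∑ i ∈ c.support, c i * i ^ 4) / 6)
      ≡ ((∑ i ∈ c.support, c i * i ^ 8) / 6) [ZMOD 5] := by
  set S4 := ∑ i ∈ c.support, c i * i ^ 4 with hS4
  set S8 := ∑ i ∈ c.support, c i * i ^ 8 with hS8
  have h2S4 : (2:ℤ) ∣ S4 := two_dvd_S c hodd 4 (by norm_num)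
  have h2S8 : (2:ℤ) ∣ S8 := two_dvd_S c hodd 8 (by norm_num)
  have h3S4 : (3:ℤ) ∣ S4 := three_dvd_S c h3 4 (by decide) (by norm_num)
  have h3S8 : (3:ℤ) ∣ S8 := three_dvd_S c h3 8 (by decide) (by norm_num)
  have h6S4 : (6:ℤ) ∣ S4 := by omega
  have h6S8 : (6:ℤ) ∣ S8 := by omega
  have h5 : (5:ℤ) ∣ S8 - S4 := by
    have : ((S8 - S4 : ℤ) : ZMod 5) = 0 := by
      rw [hS8, hS4]
      push_cast
      rw [← Finset.sum_sub_distrib]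
      refine Finset.sum_eq_zero fun i _ => ?_
      have : ((i : ZMod 5)) ^ 8 = ((i : ZMod 5)) ^ 4 := by
        have : ∀ x : ZMod 5, x ^ 8 = x ^ 4 := by decide
        exact this _
      rw [this]; ring
    exact_mod_cast (ZMod.intCast_zmod_eq_zero_iff_dvd _ 5).mp this
  obtain ⟨a, ha⟩ := h6S4
  obtain ⟨b, hb⟩ := h6S8
  have hab : (5:ℤ) ∣ b - a := by
    have h30 : (30:ℤ) ∣ S8 - S4 := by
      have h6 : (6:ℤ) ∣ S8 - S4 := by omega
      omega
    rw [ha, hb] at h30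
    have : (30:ℤ) ∣ 6 * (b - a) := by ring_nf; ring_nf at h30; omega
    omega
  have e4 : S4 / 6 = a := by rw [ha]; exact Int.mul_ediv_cancel_left a (by norm_num)
  have e8 : S8 / 6 = b := by rw [hb]; exact Int.mul_ediv_cancel_left b (by norm_num)
  rw [e4, e8]
  exact Int.modEq_iff_dvd.mpr hab
end

section
/- For integers 2 ≤ k ≤ i, the integer λ_{2k} := (2k)!/(2·3^{m+1}) divides the integer λ_{2i} := (2i)!/(2·3^{n+1}), where m is the 3-adic valuation of k and n is the 3-adic valuation of i. -/
private lemma lambda_aux_dvd (k : ℕ) (hk : 2 ≤ k) :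
    2 * 3 ^ (padicValNat 3 k + 1) ∣ (2 * k).factorial := by
  set m := padicValNat 3 k with hm
  rcases Nat.eq_zero_or_pos m with hm0 | hm1
  · rw [hm0]
    have h : (3:ℕ).factorial ∣ (2*k).factorial := Nat.factorial_dvd_factorial (by omega)
    simpa [Nat.factorial] using h
  · have h3k : 3^m ∣ k := pow_padicValNat_dvd
    have h1 : 2 * 3^(m+1) ∣ 2*k*k := by
      have hkk : 3^(m+1) ∣ k * k := by
        calc 3^(m+1) ∣ 3^(m+m) := pow_dvd_pow 3 (by omega)
          _ = 3^m * 3^m := by rw [pow_add]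
          _ ∣ k * k := mul_dvd_mul h3k h3k
      calc 2 * 3^(m+1) ∣ 2 * (k*k) := mul_dvd_mul_left 2 hkk
        _ = 2*k*k := by ring
    have h2 : 2*k*k ∣ (2*k).factorial := by
      have hfac := Nat.factorial_succ (2*k-1)
      rw [show 2*k-1+1 = 2*k by omega] at hfac
      rw [hfac]
      exact mul_dvd_mul_left (2*k) (Nat.dvd_factorial (by omega) (by omega))
    exact h1.trans h2

private lemma lambda_key (k i : ℕ) (hk : 2 ≤ k) (hki : k ≤ i) :
    padicValNat 3 ((2*k).factorial) + padicValNat 3 i ≤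
      padicValNat 3 ((2*i).factorial) + padicValNat 3 k := by
  haveI : Fact (Nat.Prime 3) := ⟨by norm_num⟩
  rcases eq_or_lt_of_le hki with rfl | hlt
  · exact le_refl _
  set m := padicValNat 3 k with hm
  set n := padicValNat 3 i with hn
  set b := Nat.log 3 (2*i) + 1 with hb
  have hb2i : Nat.log 3 (2*i) < b := Nat.lt_succ_self _
  have hb2k : Nat.log 3 (2*k) < b :=
    lt_of_le_of_lt (Nat.log_mono_right (by omega)) hb2i
  rw [padicValNat_factorial hb2k, padicValNat_factorial hb2i]
  by_cases hmn : n ≤ m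
  · have hsum : ∑ j ∈ Finset.Ico 1 b, 2*k/3^j ≤ ∑ j ∈ Finset.Ico 1 b, 2*i/3^j :=
      Finset.sum_le_sum (fun j _ => Nat.div_le_div_right (by omega))
    omega
  · push_neg at hmn
    have hnb : n + 1 ≤ b := by
      have h3n : 3^n ≤ i := Nat.le_of_dvd (by omega) pow_padicValNat_dvd
      have hlog : n ≤ Nat.log 3 (2*i) :=
        Nat.le_log_of_pow_le (by norm_num) (le_trans h3n (by omega))
      omega
    have hsub : Finset.Ico (m+1) (n+1) ⊆ Finset.Ico 1 b :=
      Finset.Ico_subset_Ico (by omega) hnb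
    have hsplit_k : ∑ j ∈ Finset.Ico 1 b \ Finset.Ico (m+1) (n+1), 2*k/3^j +
        ∑ j ∈ Finset.Ico (m+1) (n+1), 2*k/3^j = ∑ j ∈ Finset.Ico 1 b, 2*k/3^j :=
      Finset.sum_sdiff hsub
    have hsplit_i : ∑ j ∈ Finset.Ico 1 b \ Finset.Ico (m+1) (n+1), 2*i/3^j +
        ∑ j ∈ Finset.Ico (m+1) (n+1), 2*i/3^j = ∑ j ∈ Finset.Ico 1 b, 2*i/3^j :=
      Finset.sum_sdiff hsub
    have h1 : ∑ j ∈ Finset.Ico 1 b \ Finset.Ico (m+1) (n+1), 2*k/3^j ≤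
        ∑ j ∈ Finset.Ico 1 b \ Finset.Ico (m+1) (n+1), 2*i/3^j :=
      Finset.sum_le_sum (fun j _ => Nat.div_le_div_right (by omega))
    have h2 : ∑ j ∈ Finset.Ico (m+1) (n+1), (2*k/3^j + 1) ≤
        ∑ j ∈ Finset.Ico (m+1) (n+1), 2*i/3^j := by
      apply Finset.sum_le_sum
      intro j hj
      rw [Finset.mem_Ico] at hj
      have h3ji : 3^j ∣ 2*i :=
        Dvd.dvd.mul_left ((pow_dvd_pow 3 (by omega : j ≤ n)).trans pow_padicValNat_dvd) 2
      exact Nat.div_lt_div_of_lt_of_dvd h3ji (by omega)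
    rw [Finset.sum_add_distrib, Finset.sum_const, Nat.card_Ico, smul_eq_mul, mul_one] at h2
    omega

/-- For integers `2 ≤ k ≤ i`, the integer
`λ_{2k} = (2k)!/(2·3^{v₃(k)+1})` divides the integer
`λ_{2i} = (2i)!/(2·3^{v₃(i)+1})`. -/
theorem lambda_dvd_lambda (k i : ℕ) (hk : 2 ≤ k) (hki : k ≤ i) :
    (2 * k).factorial / (2 * 3 ^ (padicValNat 3 k + 1)) ∣
      (2 * i).factorial / (2 * 3 ^ (padicValNat 3 i + 1)) := by
  have h3 : Nat.Prime 3 := by norm_num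
  have hdk := lambda_aux_dvd k hk
  have hdi := lambda_aux_dvd i (by omega)
  have hfk : (2*k).factorial ≠ 0 := Nat.factorial_ne_zero _
  have hfi : (2*i).factorial ≠ 0 := Nat.factorial_ne_zero _
  have hdk0 : (0:ℕ) < 2 * 3 ^ (padicValNat 3 k + 1) := by positivity
  have hdi0 : (0:ℕ) < 2 * 3 ^ (padicValNat 3 i + 1) := by positivity
  have hLk : (2 * k).factorial / (2 * 3 ^ (padicValNat 3 k + 1)) ≠ 0 :=
    (Nat.div_pos (Nat.le_of_dvd (Nat.factorial_pos _) hdk) hdk0).ne'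
  have hLi : (2 * i).factorial / (2 * 3 ^ (padicValNat 3 i + 1)) ≠ 0 :=
    (Nat.div_pos (Nat.le_of_dvd (Nat.factorial_pos _) hdi) hdi0).ne'
  rw [← Nat.factorization_le_iff_dvd hLk hLi, Nat.factorization_div hdk,
    Nat.factorization_div hdi, Finsupp.le_def]
  intro p
  rw [Finsupp.tsub_apply, Finsupp.tsub_apply]
  have hmono : ((2*k).factorial).factorization p ≤ ((2*i).factorial).factorization p := by
    have := (Nat.factorization_le_iff_dvd hfk hfi).mpr
      (Nat.factorial_dvd_factorial (by omega)) 
    exact this p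
  have hfacd : ∀ (v : ℕ), (2 * 3 ^ (padicValNat 3 v + 1)).factorization p =
      (2:ℕ).factorization p + (padicValNat 3 v + 1) * (3:ℕ).factorization p := by
    intro v
    rw [Nat.factorization_mul (by norm_num) (by positivity), Nat.factorization_pow]
    simp [Finsupp.smul_apply, mul_comm]
  rw [hfacd k, hfacd i]
  by_cases hp : p = 3
  · subst hp
    rw [h3.factorization]
    have h2f : (2:ℕ).factorization 3 = 0 := by
      rw [Nat.prime_two.factorization]; simp [Finsupp.single_apply]
    rw [h2f, Finsupp.single_apply]
    simp only [if_true, mul_one, zero_add]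
    have hkey := lambda_key k i hk hki
    rw [Nat.factorization_def _ h3, Nat.factorization_def _ h3]
    rw [Nat.factorization_def _ h3, Nat.factorization_def _ h3] at hmono
    omega
  · have h3f : (3:ℕ).factorization p = 0 := by
      rw [h3.factorization, Finsupp.single_apply, if_neg (fun h => hp h.symm)]
    rw [h3f]
    omega
end

section
/- Let i ≥ 2 and let k_1, …, k_m (m ≥ 2) be positive integers with k_1 + ⋯ + k_m = i. Define λ_{2r} := (2r)!/(2·3^{v_3(r)+1}) ∈ ℚ for r ≥ 1, where v_3(r) is the 3-adic valuation of r (note λ_2 = 1/3). Then the rational number λ_{2i} / (λ_{2k_1} · λ_{2k_2} ⋯ λ_{2k_m}) is an integer. -/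
open Finset

/-- `λ_{2r} = (2r)!/(2·3^{v₃(r)+1})` as a rational number (so `λ₂ = 1/3`). -/
def lambdaJones (r : ℕ) : ℚ :=
  ((2 * r).factorial : ℚ) / (2 * 3 ^ (padicValNat 3 r + 1))

/-- Pair lemma: `v₃(a+b) ≤ v₃(a) + v₃(b) + v₃(C(2a+2b, 2a))`. -/
lemma padicValNat_add_le_choose (a b : ℕ) (ha : 0 < a) (hb : 0 < b) :
    padicValNat 3 (a + b) ≤ padicValNat 3 a + padicValNat 3 b +
      padicValNat 3 ((2 * b + 2 * a).choose (2 * a)) := by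
  set va := padicValNat 3 a
  set vb := padicValNat 3 b
  set v := padicValNat 3 (a + b)
  by_cases hv : v ≤ min va vb
  · omega
  push_neg at hv
  set u := min va vb with hu
  -- Kummer bound
  have hlog : Nat.log 3 (2 * b + 2 * a) < Nat.log 3 (2 * b + 2 * a) + 1 := Nat.lt_succ_self _
  have hK := padicValNat_choose' (p := 3) (n := 2 * b) (k := 2 * a)
      (b := Nat.log 3 (2 * b + 2 * a) + 1) hlog
  -- the carries include all t with u < t ≤ v
  have hsub : Finset.Ico (u + 1) (v + 1) ⊆
      (Finset.Ico 1 (Nat.log 3 (2 * b + 2 * a) + 1)).filter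
        fun t => 3 ^ t ≤ 2 * a % 3 ^ t + 2 * b % 3 ^ t := by
    intro t ht
    simp only [Finset.mem_Ico] at ht
    have htu : u < t := by omega
    have htv : t ≤ v := by omega
    have h3v : (3 : ℕ) ^ v ∣ a + b := pow_padicValNat_dvd
    have h3t : (3 : ℕ) ^ t ∣ a + b := dvd_trans (pow_dvd_pow 3 htv) h3v
    -- 3^t ≤ a+b hence t ≤ log
    have hle : (3 : ℕ) ^ t ≤ a + b := Nat.le_of_dvd (by omega) h3t
    have htlog : t ≤ Nat.log 3 (2 * b + 2 * a) := by
      apply Nat.le_log_of_pow_le (by norm_num)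
      omega
    have h3t2 : (3 : ℕ) ^ t ∣ 2 * a + 2 * b := by
      have : 2 * a + 2 * b = 2 * (a + b) := by ring
      rw [this]; exact Dvd.dvd.mul_left h3t 2
    -- not both divisible
    have hnot : ¬ ((3 : ℕ) ^ t ∣ a ∧ (3 : ℕ) ^ t ∣ b) := by
      rintro ⟨hda, hdb⟩
      have h1 : t ≤ va := (padicValNat_dvd_iff_le ha.ne').mp hda
      have h2 : t ≤ vb := (padicValNat_dvd_iff_le hb.ne').mp hdb
      omega
    have hmodsum : (2 * a % 3 ^ t + 2 * b % 3 ^ t) % 3 ^ t = 0 := by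
      rw [← Nat.add_mod]
      exact Nat.mod_eq_zero_of_dvd h3t2
    have hpos : 0 < 2 * a % 3 ^ t + 2 * b % 3 ^ t := by
      rcases Nat.eq_zero_or_pos (2 * a % 3 ^ t + 2 * b % 3 ^ t) with h0 | h0
      · exfalso
        have hda : (3 : ℕ) ^ t ∣ 2 * a := Nat.dvd_of_mod_eq_zero (by omega)
        have hdb : (3 : ℕ) ^ t ∣ 2 * b := Nat.dvd_of_mod_eq_zero (by omega)
        have hcop : Nat.Coprime (3 ^ t) 2 := Nat.Coprime.pow_left _ (by norm_num)
        exact hnot ⟨(Nat.Coprime.dvd_of_dvd_mul_left hcop hda),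
          (Nat.Coprime.dvd_of_dvd_mul_left hcop hdb)⟩
      · exact h0
    have hdvdsum : (3 : ℕ) ^ t ∣ (2 * a % 3 ^ t + 2 * b % 3 ^ t) :=
      Nat.dvd_of_mod_eq_zero hmodsum
    have : (3 : ℕ) ^ t ≤ 2 * a % 3 ^ t + 2 * b % 3 ^ t := Nat.le_of_dvd hpos hdvdsum
    simp only [Finset.mem_filter, Finset.mem_Ico]
    exact ⟨⟨by omega, by omega⟩, this⟩
  have hcard : v - u ≤ padicValNat 3 ((2 * b + 2 * a).choose (2 * a)) := by
    rw [hK]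
    calc v - u = (Finset.Ico (u + 1) (v + 1)).card := by rw [Nat.card_Ico]; omega
      _ ≤ _ := Finset.card_le_card hsub
  omega

/-- Main inequality by induction over the finset. -/
lemma main_ineq {ι : Type*} [DecidableEq ι] (s : Finset ι) (f : ι → ℕ) (hs : s.Nonempty)
    (hf : ∀ i ∈ s, 0 < f i) :
    padicValNat 3 (∑ i ∈ s, f i) + 1 ≤
      (∑ i ∈ s, padicValNat 3 (f i)) + s.card +
      padicValNat 3 (Nat.multinomial s fun i => 2 * f i) := by
  induction hs using Finset.Nonempty.cons_induction with
  | singleton a => simp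
  | cons a s ha hs ih =>
    have hf' : ∀ i ∈ s, 0 < f i := fun i hi => hf i (Finset.mem_cons_of_mem hi)
    have hfa : 0 < f a := hf a (Finset.mem_cons_self a s)
    have ih' := ih hf'
    set S := ∑ i ∈ s, f i with hS
    have hSpos : 0 < S := by
      obtain ⟨x, hx⟩ := hs
      exact lt_of_lt_of_le (hf' x hx) (Finset.single_le_sum (fun i hi => Nat.zero_le _) hx)
    have hpair := padicValNat_add_le_choose (f a) S hfa hSpos
    have hmul : Nat.multinomial (Finset.cons a s ha) (fun i => 2 * f i) =
        (2 * f a + ∑ i ∈ s, 2 * f i).choose (2 * f a) *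
          Nat.multinomial s (fun i => 2 * f i) := Nat.multinomial_cons ha _
    have hsum2 : ∑ i ∈ s, 2 * f i = 2 * S := by rw [hS, Finset.mul_sum]
    have hchoosepos : 0 < (2 * f a + 2 * S).choose (2 * f a) :=
      Nat.choose_pos (by omega)
    have hmpos : 0 < Nat.multinomial s fun i => 2 * f i := Nat.multinomial_pos _ _
    have hveq : padicValNat 3 (Nat.multinomial (Finset.cons a s ha) fun i => 2 * f i) =
        padicValNat 3 ((2 * f a + 2 * S).choose (2 * f a)) +
          padicValNat 3 (Nat.multinomial s fun i => 2 * f i) := by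
      rw [hmul, hsum2, padicValNat.mul hchoosepos.ne' hmpos.ne']
    have hco : (2 * S + 2 * f a).choose (2 * f a) = (2 * f a + 2 * S).choose (2 * f a) := by
      rw [Nat.add_comm]
    rw [Finset.sum_cons, Finset.sum_cons, Finset.card_cons, hveq, ← hS]
    rw [hco] at hpair
    omega

/-- If `i ≥ 2` and `k₁, …, k_m` (`m ≥ 2`) are positive integers
with `k₁ + ⋯ + k_m = i`, then `λ_{2i} / (λ_{2k₁} ⋯ λ_{2k_m})` is an integer. -/
theorem lambda_prod_dvd_lambda (i m : ℕ) (hi : 2 ≤ i) (hm : 2 ≤ m)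
    (k : Fin m → ℕ) (hk : ∀ j, 1 ≤ k j) (hsum : ∑ j, k j = i) :
    ∃ z : ℤ, lambdaJones i / ∏ j, lambdaJones (k j) = (z : ℚ) := by
  classical
  set M := Nat.multinomial Finset.univ (fun j : Fin m => 2 * k j) with hM
  set A := ∑ j : Fin m, (padicValNat 3 (k j) + 1) with hA
  set B := padicValNat 3 i + 1 with hB
  have hMpos : 0 < M := Nat.multinomial_pos _ _
  -- main inequality
  have hmain : B ≤ A + padicValNat 3 M := by
    have huniv : (Finset.univ : Finset (Fin m)).Nonempty := by
      refine ⟨⟨0, by omega⟩, Finset.mem_univ _⟩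
    have := main_ineq Finset.univ k huniv (fun j _ => hk j)
    rw [hsum, ← hM] at this
    have hcard : (Finset.univ : Finset (Fin m)).card = m := Finset.card_univ.trans (Fintype.card_fin m)
    have hAeq : A = (∑ j : Fin m, padicValNat 3 (k j)) + m := by
      rw [hA, Finset.sum_add_distrib]
      simp
    omega
  -- spec of multinomial
  have hspec : (∏ j : Fin m, (2 * k j).factorial) * M = (2 * i).factorial := by
    have := Nat.multinomial_spec (Finset.univ : Finset (Fin m)) (fun j => 2 * k j)
    rwa [show (∑ j : Fin m, 2 * k j) = 2 * i by rw [← hsum, Finset.mul_sum]] at this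
  -- divisibility
  have hdvd : (3 : ℕ) ^ B ∣ M * 2 ^ (m - 1) * 3 ^ A := by
    have h1 : (3 : ℕ) ^ B ∣ 3 ^ (padicValNat 3 M + A) := pow_dvd_pow 3 (by omega)
    have h2 : (3 : ℕ) ^ (padicValNat 3 M + A) ∣ M * 3 ^ A := by
      rw [pow_add]
      exact mul_dvd_mul pow_padicValNat_dvd dvd_rfl
    have h3 : M * 3 ^ A ∣ M * 2 ^ (m - 1) * 3 ^ A :=
      mul_dvd_mul (dvd_mul_right M (2 ^ (m - 1))) dvd_rfl
    exact dvd_trans h1 (dvd_trans h2 h3)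
  set N := M * 2 ^ (m - 1) * 3 ^ A with hN
  refine ⟨(N / 3 ^ B : ℕ), ?_⟩
  -- compute the product of lambdas
  have hprod : ∏ j : Fin m, lambdaJones (k j) =
      ((∏ j : Fin m, ((2 * k j).factorial : ℚ))) / ((2 : ℚ) ^ m * 3 ^ A) := by
    unfold lambdaJones
    rw [Finset.prod_div_distrib]
    congr 1
    rw [Finset.prod_mul_distrib, Finset.prod_const, Finset.card_univ, Fintype.card_fin,
      Finset.prod_pow_eq_pow_sum]
  rw [hprod]
  unfold lambdaJones
  have hfacpos : (0 : ℚ) < ∏ j : Fin m, ((2 * k j).factorial : ℚ) := by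
    apply Finset.prod_pos
    intro j _
    exact_mod_cast Nat.factorial_pos _
  have hnatid : (2 * i).factorial * 2 ^ m * 3 ^ A = (N / 3 ^ B) * 3 ^ B * 2 *
      (∏ j : Fin m, (2 * k j).factorial) := by
    rw [Nat.div_mul_cancel hdvd, hN]
    have h2m : 2 ^ m = 2 ^ (m - 1) * 2 := by
      rw [← pow_succ]
      congr 1
      omega
    calc (2 * i).factorial * 2 ^ m * 3 ^ A
        = ((∏ j : Fin m, (2 * k j).factorial) * M) * 2 ^ m * 3 ^ A := by rw [hspec]
      _ = M * 2 ^ (m - 1) * 3 ^ A * 2 * (∏ j : Fin m, (2 * k j).factorial) := by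
          rw [h2m]; ring
  have h3B : ((3 : ℚ)) ^ B ≠ 0 := by positivity
  have hQ : ((2 * i).factorial : ℚ) * 2 ^ m * 3 ^ A =
      ((N / 3 ^ B : ℕ) : ℚ) * 3 ^ B * 2 * ∏ j : Fin m, ((2 * k j).factorial : ℚ) := by
    exact_mod_cast congrArg (Nat.cast : ℕ → ℚ) hnatid
  have hBrw : (3 : ℚ) ^ (padicValNat 3 i + 1) = 3 ^ B := by rw [hB]
  rw [hBrw, Int.cast_natCast]
  have hD2 : (2 : ℚ) ^ m * 3 ^ A ≠ 0 := by positivity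
  have hD1 : (2 : ℚ) * 3 ^ B ≠ 0 := by positivity
  have hPD : (∏ j : Fin m, ((2 * k j).factorial : ℚ)) / ((2 : ℚ) ^ m * 3 ^ A) ≠ 0 :=
    div_ne_zero hfacpos.ne' hD2
  rw [div_eq_iff hPD, div_eq_iff hD1, ← mul_div_assoc, div_mul_eq_mul_div,
    eq_div_iff hD2]
  linear_combination hQ
end
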